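/- Suppose a, k, m are positive integers with m ≥ 2 satisfying a·S_k(m) = m^k. Then k + 1 < a·m < (a + 1)(k + 1). -/

import Mathlib

/-- `S k m = 1^k + 2^k + ⋯ + (m-1)^k`. -/
def S (k m : ℕ) : ℕ := ∑ j ∈ Finset.Ico 1 m, j ^ k

/-!
Every term of `(x + 1)^(k+1) - x^(k+1) = ∑_{i ≤ k} (x + 1)^i x^(k-i)` lies between `x^k` and
`(x + 1)^k`, strictly so for one term when `k > 0`. Telescoping over `x = 0, …, m - 1` gives
`(k + 1) S_k(m) < m^(k+1) < (k + 1) S_k(m + 1) = (k + 1) (S_k(m) + m^k)`.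
Since `m^(k+1) = a m S_k(m)` and `m^k = a S_k(m)`, dividing by `S_k(m)` yields both bounds.
-/

open Finset

theorem add_one_pow_succ_sub_pow_eq_sum {R : Type*} [CommRing R] (x : R) (k : ℕ) :
    (x + 1) ^ (k + 1) - x ^ (k + 1) = ∑ i ∈ range (k + 1), (x + 1) ^ i * x ^ (k - i) := by
  simpa using (geom_sum₂_mul (x + 1) x (k + 1)).symm

section Ordered

variable {R : Type*} [CommRing R] [LinearOrder R] [IsStrictOrderedRing R]

theorem succ_mul_pow_lt_add_one_pow_succ_sub_pow {x : R} (hx : 0 ≤ x) {k : ℕ} (hk : k ≠ 0) :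
    (k + 1) * x ^ k < (x + 1) ^ (k + 1) - x ^ (k + 1) := by
  have hconst : (k + 1) * x ^ k = ∑ _i ∈ range (k + 1), x ^ k := by simp
  rw [hconst, add_one_pow_succ_sub_pow_eq_sum]
  refine sum_lt_sum (fun i hi => ?_) ⟨k, self_mem_range_succ k, ?_⟩
  · calc x ^ k = x ^ i * x ^ (k - i) := by
          rw [← pow_add, Nat.add_sub_cancel' (mem_range_succ_iff.mp hi)]
      _ ≤ (x + 1) ^ i * x ^ (k - i) := by gcongr; linarith
  · simpa using pow_lt_pow_left₀ (lt_add_one x) hx hk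

theorem add_one_pow_succ_sub_pow_lt_succ_mul_pow {x : R} (hx : 0 ≤ x) {k : ℕ} (hk : k ≠ 0) :
    (x + 1) ^ (k + 1) - x ^ (k + 1) < (k + 1) * (x + 1) ^ k := by
  have hconst : (k + 1) * (x + 1) ^ k = ∑ _i ∈ range (k + 1), (x + 1) ^ k := by simp
  rw [hconst, add_one_pow_succ_sub_pow_eq_sum]
  refine sum_lt_sum (fun i hi => ?_) ⟨0, by simp, ?_⟩
  · calc (x + 1) ^ i * x ^ (k - i) ≤ (x + 1) ^ i * (x + 1) ^ (k - i) := by gcongr; linarith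
      _ = (x + 1) ^ k := by rw [← pow_add, Nat.add_sub_cancel' (mem_range_succ_iff.mp hi)]
  · simpa using pow_lt_pow_left₀ (lt_add_one x) hx hk

end Ordered

theorem S_eq_sum_range {k : ℕ} (hk : k ≠ 0) {m : ℕ} (hm : m ≠ 0) :
    S k m = ∑ j ∈ range m, j ^ k := by
  rw [sum_range_eq_add_Ico _ (Nat.pos_of_ne_zero hm), zero_pow hk, zero_add, S]

theorem S_succ (k : ℕ) {m : ℕ} (hm : 1 ≤ m) : S k (m + 1) = S k m + m ^ k :=
  sum_Ico_succ_top hm _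

theorem pow_succ_eq_sum_range_sub {R : Type*} [CommRing R] (k m : ℕ) :
    (m : R) ^ (k + 1) = ∑ j ∈ range m, (((j : R) + 1) ^ (k + 1) - (j : R) ^ (k + 1)) := by
  simpa using (sum_range_sub (fun j : ℕ => (j : R) ^ (k + 1)) m).symm

theorem succ_mul_S_lt_pow_succ {k m : ℕ} (hk : k ≠ 0) (hm : m ≠ 0) :
    (k + 1) * S k m < m ^ (k + 1) := by
  zify
  rw [S_eq_sum_range hk hm, pow_succ_eq_sum_range_sub]
  push_cast
  rw [mul_sum]
  exact sum_lt_sum_of_nonempty (nonempty_range_iff.mpr hm)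
    fun j _ => succ_mul_pow_lt_add_one_pow_succ_sub_pow j.cast_nonneg hk

theorem pow_succ_lt_succ_mul_S_succ {k m : ℕ} (hk : k ≠ 0) (hm : m ≠ 0) :
    m ^ (k + 1) < (k + 1) * S k (m + 1) := by
  zify
  rw [S_eq_sum_range hk m.succ_ne_zero, sum_range_succ', pow_succ_eq_sum_range_sub]
  push_cast
  rw [zero_pow hk, add_zero, mul_sum]
  exact sum_lt_sum_of_nonempty (nonempty_range_iff.mpr hm)
    fun j _ => add_one_pow_succ_sub_pow_lt_succ_mul_pow j.cast_nonneg hk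

theorem am_bounds_general (a k m : ℕ) (hk : 0 < k) (hm : 2 ≤ m)
    (heq : a * S k m = m ^ k) :
    k + 1 < a * m ∧ a * m < (a + 1) * (k + 1) := by
  have hm0 : m ≠ 0 := by omega
  have hpow : m ^ (k + 1) = a * m * S k m := by rw [pow_succ, ← heq]; ring
  constructor
  · refine lt_of_mul_lt_mul_right ?_ (S k m).zero_le
    rw [← hpow]
    exact succ_mul_S_lt_pow_succ hk.ne' hm0
  · refine lt_of_mul_lt_mul_right ?_ (S k m).zero_le
    calc a * m * S k m = m ^ (k + 1) := hpow.symm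
      _ < (k + 1) * S k (m + 1) := pow_succ_lt_succ_mul_S_succ hk.ne' hm0
      _ = (a + 1) * (k + 1) * S k m := by rw [S_succ k (by omega), ← heq]; ring

/-- If `a·S_k(m) = m^k` with `m ≥ 2`, then `k + 1 < a·m < (a + 1)(k + 1)`. -/
theorem am_bounds (a k m : ℕ) (ha : 0 < a) (hk : 0 < k) (hm : 2 ≤ m)
    (heq : a * S k m = m ^ k) :
    k + 1 < a * m ∧ a * m < (a + 1) * (k + 1) :=
  am_bounds_general a k m hk hm heq
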